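/- Let S be a band of topological groups and x ∈ S. If 𝓑 is a neighborhood base at x⁰ consisting of open sets, then {(xU)* : U ∈ 𝓑} is a neighborhood base at x consisting of open sets; that is, each (xU)* with U ∈ 𝓑 is an open set containing x, and for every open set W containing x there exists U ∈ 𝓑 with (xU)* ⊆ W. -/

import Mathlib

open Set TopologicalSpace

/-- The principal left ideal (with `a` adjoined) generated by `a`: `{a} ∪ {s*a : s ∈ S}`. -/
def leftIdeal {S : Type*} [Semigroup S] (a : S) : Set S :=
  insert a {x | ∃ s, x = s * a}

/-- The principal right ideal (with `a` adjoined) generated by `a`: `{a} ∪ {a*s : s ∈ S}`. -/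
def rightIdeal {S : Type*} [Semigroup S] (a : S) : Set S :=
  insert a {x | ∃ s, x = a * s}

/-- Green's relation ℋ on a semigroup. -/
def greenH {S : Type*} [Semigroup S] (a b : S) : Prop :=
  leftIdeal a = leftIdeal b ∧ rightIdeal a = rightIdeal b

/-- The ℋ-class of an element. -/
def HClass {S : Type*} [Semigroup S] (x : S) : Set S := {y | greenH y x}

/-- A semigroup is completely regular if every element is completely regular. -/
def CompletelyRegularSemigroup (S : Type*) [Semigroup S] : Prop :=
  ∀ a : S, ∃ x, a = a * x * a ∧ a * x = x * a

/-- Green's relation ℋ is a congruence. -/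
def HIsCongruence (S : Type*) [Semigroup S] : Prop :=
  ∀ a b c : S, greenH a b → greenH (a * c) (b * c) ∧ greenH (c * a) (c * b)

/-- A cryptogroup is a completely regular semigroup in which ℋ is a congruence. -/
def IsCryptogroup (S : Type*) [Semigroup S] : Prop :=
  CompletelyRegularSemigroup S ∧ HIsCongruence S

/-- In a cryptogroup every ℋ-class is a group; `idp x` (written `x⁰`) is the identity of the
ℋ-class of `x`, and `inv x` (written `x⁻¹`) is the inverse of `x` inside its ℋ-class. -/
structure CryptoOps (S : Type*) [Semigroup S] where
  idp : S → S
  inv : S → S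
  idp_mem : ∀ x, greenH (idp x) x
  idp_mul : ∀ x y, greenH y x → idp x * y = y
  mul_idp : ∀ x y, greenH y x → y * idp x = y
  inv_mem : ∀ x, greenH (inv x) x
  mul_inv : ∀ x, x * inv x = idp x
  inv_mul : ∀ x, inv x * x = idp x

/-- The set `E(S)` of idempotents of a semigroup. -/
def idemSet (S : Type*) [Semigroup S] : Set S := {e | e * e = e}

/-- `(xU)* = {y ∈ S : x⁻¹*y ∈ U and x⁰ = y⁰}`. -/
def lstar {S : Type*} [Semigroup S] (ops : CryptoOps S) (x : S) (U : Set S) : Set S :=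
  {y | ops.inv x * y ∈ U ∧ ops.idp x = ops.idp y}

/-- `(Ux)* = {y ∈ S : y*x⁻¹ ∈ U and x⁰ = y⁰}`. -/
def rstar {S : Type*} [Semigroup S] (ops : CryptoOps S) (U : Set S) (x : S) : Set S :=
  {y | y * ops.inv x ∈ U ∧ ops.idp x = ops.idp y}

/-- `(AB)* = ⋃_{a ∈ A} (aB)*`. -/
def setStar {S : Type*} [Semigroup S] (ops : CryptoOps S) (A B : Set S) : Set S :=
  ⋃ a ∈ A, lstar ops a B

/-- A full subcryptogroup: contains all idempotents, and closed under multiplication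
and inversion. -/
def IsFullSubcryptogroup {S : Type*} [Semigroup S] (ops : CryptoOps S) (K : Set S) : Prop :=
  idemSet S ⊆ K ∧ (∀ x ∈ K, ∀ y ∈ K, x * y ∈ K) ∧ (∀ x ∈ K, ops.inv x ∈ K)

/-!
On the open ℋ-class `H_x`, the maps `y ↦ x⁻¹ * y` and `u ↦ x * u` are mutually inverse and
continuous. Hence `(xU)* = H_x ∩ (x⁻¹ * ·)⁻¹' U` is open, it contains `x` because `x⁻¹ * x = x⁰`,
and it lies in `W` as soon as `U ⊆ (x * ·)⁻¹' W`, an open neighbourhood of `x⁰` since `x * x⁰ = x`.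
-/

section GreenH

variable {S : Type*} [Semigroup S]

theorem greenH_refl (a : S) : greenH a a := ⟨rfl, rfl⟩

theorem greenH.symm {a b : S} (h : greenH a b) : greenH b a := ⟨h.1.symm, h.2.symm⟩

theorem greenH.trans {a b c : S} (h : greenH a b) (h' : greenH b c) : greenH a c :=
  ⟨h.1.trans h'.1, h.2.trans h'.2⟩

end GreenH

namespace CryptoOps

variable {S : Type*} [Semigroup S] (ops : CryptoOps S)

theorem idp_eq_idp_iff {x y : S} : ops.idp x = ops.idp y ↔ greenH y x := by
  constructor
  · intro h
    exact (h ▸ ops.idp_mem y).symm.trans (ops.idp_mem x)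
  · intro h
    have hyx : ops.idp y * ops.idp x = ops.idp y :=
      ops.mul_idp x (ops.idp y) ((ops.idp_mem y).trans h)
    have hxy : ops.idp y * ops.idp x = ops.idp x :=
      ops.idp_mul y (ops.idp x) ((ops.idp_mem x).trans h.symm)
    exact hxy.symm.trans hyx

theorem mul_idp_self (x : S) : x * ops.idp x = x := ops.mul_idp x x (greenH_refl x)

theorem mul_inv_mul_cancel {x y : S} (h : ops.idp x = ops.idp y) :
    x * (ops.inv x * y) = y := by
  rw [← mul_assoc, ops.mul_inv]
  exact ops.idp_mul x y ((ops.idp_eq_idp_iff).mp h)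

end CryptoOps

section Lstar

variable {S : Type*} [Semigroup S] (ops : CryptoOps S)

theorem lstar_eq_preimage_inter_hClass (x : S) (U : Set S) :
    lstar ops x U = (ops.inv x * ·) ⁻¹' U ∩ HClass x := by
  ext
  exact and_congr_right fun _ => ops.idp_eq_idp_iff

theorem self_mem_lstar {x : S} {U : Set S} (hU : ops.idp x ∈ U) : x ∈ lstar ops x U :=
  ⟨by rwa [ops.inv_mul], rfl⟩

theorem lstar_subset {x : S} {U W : Set S} (hUW : U ⊆ (x * ·) ⁻¹' W) : lstar ops x U ⊆ W :=
  fun _ hy => ops.mul_inv_mul_cancel hy.2 ▸ hUW hy.1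

theorem isOpen_lstar [TopologicalSpace S] [ContinuousMul S] {x : S} {U : Set S}
    (hHx : IsOpen (HClass x)) (hU : IsOpen U) : IsOpen (lstar ops x U) := by
  rw [lstar_eq_preimage_inter_hClass]
  exact (hU.preimage (continuous_const_mul _)).inter hHx

end Lstar

theorem stmt6_general {S : Type*} [Semigroup S] [TopologicalSpace S] [ContinuousMul S]
    (ops : CryptoOps S) (hopen : ∀ x : S, IsOpen (HClass x))
    (x : S) (B : Set (Set S))
    (hBopen : ∀ U ∈ B, IsOpen U)
    (hBmem : ∀ U ∈ B, ops.idp x ∈ U)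
    (hBbase : ∀ W : Set S, IsOpen W → ops.idp x ∈ W → ∃ U ∈ B, U ⊆ W) :
    (∀ U ∈ B, IsOpen (lstar ops x U) ∧ x ∈ lstar ops x U) ∧
      (∀ W : Set S, IsOpen W → x ∈ W → ∃ U ∈ B, lstar ops x U ⊆ W) := by
  refine ⟨fun U hU => ⟨isOpen_lstar ops (hopen x) (hBopen U hU), self_mem_lstar ops (hBmem U hU)⟩,
    fun W hW hxW => ?_⟩
  have hidp_mem : ops.idp x ∈ (x * ·) ⁻¹' W := by
    simpa only [mem_preimage, ops.mul_idp_self] using hxW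
  obtain ⟨U, hUB, hUW⟩ := hBbase _ (hW.preimage (continuous_const_mul x)) hidp_mem
  exact ⟨U, hUB, lstar_subset ops hUW⟩

/-- If `𝓑` is an open neighbourhood base at `x⁰` in a band of topological groups `S`, then
`{(xU)* : U ∈ 𝓑}` is an open neighbourhood base at `x`. -/
theorem stmt6 {S : Type*} [Semigroup S] [TopologicalSpace S] [ContinuousMul S]
    (ops : CryptoOps S) (hcrypt : IsCryptogroup S)
    (hinv : Continuous ops.inv) (hopen : ∀ x : S, IsOpen (HClass x))
    (x : S) (B : Set (Set S))
    (hBopen : ∀ U ∈ B, IsOpen U)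
    (hBmem : ∀ U ∈ B, ops.idp x ∈ U)
    (hBbase : ∀ W : Set S, IsOpen W → ops.idp x ∈ W → ∃ U ∈ B, U ⊆ W) :
    (∀ U ∈ B, IsOpen (lstar ops x U) ∧ x ∈ lstar ops x U) ∧
      (∀ W : Set S, IsOpen W → x ∈ W → ∃ U ∈ B, lstar ops x U ⊆ W) :=
  stmt6_general ops hopen x B hBopen hBmem hBbase
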